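/- arXiv:1305.1502 — 2 statements merged into one kernel-verified Lean document; each statement's English description precedes it below -/
import Mathlib

section
/- Let G_d=(V_d,E_d) be a finite simple graph with nonnegative interest scores η and nonnegative social tightness scores τ, let k ≤ |V_d|, and let G be the augmented graph obtained from G_d by adding a new node v̄ with interest score η_v̄ = ε + Σ_{v_i∈V_d}(η_i + Σ_{v_j∈V_d: e_{i,j}∈E_d} τ_{i,j}) for some ε > 0, adding an edge between v̄ and every node of V_d with social tightness score 0 in both directions. Then a k-node subset F*_d ⊆ V_d maximizes the willingness W over all k-node subsets of V_d (with no connectivity requirement) if and only if F* = F*_d ∪ {v̄} maximizes the willingness W over all (k+1)-node subsets of G that induce a connected subgraph of G. -/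
open Finset

open scoped Classical in
/-- The willingness `W(F) = Σ_{v_i∈F} (η_i + Σ_{v_j∈F, e_{i,j}∈E} τ_{i,j})` of a
subset `F` of nodes of a graph `G` with interest scores `η` and social tightness
scores `τ`. -/
noncomputable def willingness {V : Type*} (G : SimpleGraph V) (η : V → ℝ)
    (τ : V → V → ℝ) (F : Finset V) : ℝ :=
  ∑ i ∈ F, (η i + ∑ j ∈ F.filter (fun j => G.Adj i j), τ i j)

/-- The graph obtained from `G` by adding a new node `v̄` (modeled as `none`)
adjacent to every node of `G` (the nodes `some v`). -/
def augment {V : Type*} (G : SimpleGraph V) : SimpleGraph (Option V) :=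
  SimpleGraph.fromRel (fun a b =>
    a = none ∨ ∃ u v, a = some u ∧ b = some v ∧ G.Adj u v)

/-- Extending the social tightness scores to the augmented graph: score `0` on
both orientations of every new edge. -/
def augTau {V : Type*} (τ : V → V → ℝ) : Option V → Option V → ℝ :=
  fun a b => match a, b with
    | some u, some v => τ u v
    | _, _ => 0


open scoped Classical in
/-- The interest score of the augmented graph: the new node `v̄` gets score
`ε + Σ_{v_i∈V_d}(η_i + Σ_{v_j : e_{i,j}∈E_d} τ_{i,j})`, all other nodes keep
their score. -/
noncomputable def augEta {V : Type*} [Fintype V] (G : SimpleGraph V) (η : V → ℝ)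
    (τ : V → V → ℝ) (ε : ℝ) : Option V → ℝ :=
  fun a => a.elim
    (ε + ∑ i, (η i + ∑ j ∈ Finset.univ.filter (fun j => G.Adj i j), τ i j)) η

/-! The new node `v̄` is adjacent to everything, so every node set containing it is connected,
and its interest score exceeds the willingness of any set of old nodes. Hence a connected
`(k+1)`-set of maximal willingness must contain `v̄`, and then its willingness is
`η_v̄ + W(F_d)` for a `k`-set `F_d ⊆ V_d`, because all edges at `v̄` have tightness `0`. -/

section Augment

variable {V : Type*}

lemma augment_adj_none_some (G : SimpleGraph V) (v : V) : (augment G).Adj none (some v) := by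
  rw [augment, SimpleGraph.fromRel_adj]
  exact ⟨by simp, Or.inl (Or.inl rfl)⟩

lemma augment_adj_some_some (G : SimpleGraph V) (u v : V) :
    (augment G).Adj (some u) (some v) ↔ G.Adj u v := by
  rw [augment, SimpleGraph.fromRel_adj]
  constructor
  · rintro ⟨-, h | h⟩ <;> obtain ⟨⟨⟩⟩ | ⟨a, b, ⟨⟩, ⟨⟩, hab⟩ := h
    exacts [hab, hab.symm]
  · intro h
    exact ⟨by simp [h.ne], Or.inl (Or.inr ⟨u, v, rfl, rfl, h⟩)⟩

lemma connected_induce_augment_of_none_mem (G : SimpleGraph V) {s : Set (Option V)}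
    (hs : none ∈ s) : ((augment G).induce s).Connected := by
  have reach_none : ∀ x : s, ((augment G).induce s).Reachable x ⟨none, hs⟩ := by
    rintro ⟨_ | v, _⟩
    · rfl
    · exact SimpleGraph.Adj.reachable (augment_adj_none_some G v).symm
  have : Nonempty s := ⟨⟨none, hs⟩⟩
  exact ⟨fun x y => (reach_none x).trans (reach_none y).symm⟩

lemma augTau_none_left (τ : V → V → ℝ) (a : Option V) : augTau τ none a = 0 := by
  cases a <;> rfl

lemma augTau_none_right (τ : V → V → ℝ) (a : Option V) : augTau τ a none = 0 := by
  cases a <;> rfl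

lemma sum_filter_insert_none_augTau [DecidableEq V] (τ : V → V → ℝ) (p : Option V → Prop)
    [DecidablePred p] (i : Option V) {s : Finset (Option V)} (hs : none ∉ s) :
    ∑ j ∈ (insert none s).filter p, augTau τ i j = ∑ j ∈ s.filter p, augTau τ i j := by
  rw [filter_insert]
  split_ifs
  · rw [sum_insert (by simp [hs]), augTau_none_right, zero_add]
  · rfl

end Augment

section Willingness

variable {V : Type*} (G : SimpleGraph V) (η : V → ℝ) (τ : V → V → ℝ)

lemma willingness_nonneg (hη : ∀ v, 0 ≤ η v) (hτ : ∀ u v, G.Adj u v → 0 ≤ τ u v)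
    (T : Finset V) : 0 ≤ willingness G η τ T := by
  classical
  refine sum_nonneg fun i _ => add_nonneg (hη i) (sum_nonneg fun j hj => ?_)
  exact hτ i j (mem_filter.mp hj).2

lemma willingness_mono (hη : ∀ v, 0 ≤ η v) (hτ : ∀ u v, G.Adj u v → 0 ≤ τ u v)
    {S T : Finset V} (hST : S ⊆ T) : willingness G η τ S ≤ willingness G η τ T := by
  classical
  unfold willingness
  calc ∑ i ∈ S, (η i + ∑ j ∈ S.filter (G.Adj i), τ i j)
      ≤ ∑ i ∈ S, (η i + ∑ j ∈ T.filter (G.Adj i), τ i j) := by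
        gcongr with i _
        exact fun j hj _ => hτ i j (mem_filter.mp hj).2
    _ ≤ ∑ i ∈ T, (η i + ∑ j ∈ T.filter (G.Adj i), τ i j) :=
        sum_le_sum_of_subset_of_nonneg hST fun i _ _ =>
          add_nonneg (hη i) (sum_nonneg fun j hj => hτ i j (mem_filter.mp hj).2)

lemma augEta_none [Fintype V] (ε : ℝ) :
    augEta G η τ ε none = ε + willingness G η τ univ := rfl

variable [DecidableEq V]

lemma willingness_augment_image_some [Fintype V] (ε : ℝ) (T : Finset V) :
    willingness (augment G) (augEta G η τ ε) (augTau τ) (T.image some) =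
      willingness G η τ T := by
  classical
  unfold willingness
  rw [sum_image (by simp)]
  refine sum_congr rfl fun u _ => ?_
  rw [filter_image, sum_image (by simp)]
  congr 2
  exact filter_congr fun v _ => augment_adj_some_some G u v

lemma willingness_augment_insert_none [Fintype V] (ε : ℝ) (T : Finset V) :
    willingness (augment G) (augEta G η τ ε) (augTau τ) (insert none (T.image some)) =
      augEta G η τ ε none + willingness G η τ T := by
  classical
  have hT : none ∉ T.image some := by simp
  rw [← willingness_augment_image_some G η τ ε T]
  unfold willingness
  rw [sum_insert hT, sum_eq_zero fun j _ => augTau_none_left τ j, add_zero]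
  congr 1
  exact sum_congr rfl fun i _ => by rw [sum_filter_insert_none_augTau τ _ i hT]

lemma willingness_augment_of_none_notMem [Fintype V] (ε : ℝ) {S : Finset (Option V)}
    (hS : none ∉ S) :
    willingness (augment G) (augEta G η τ ε) (augTau τ) S = willingness G η τ S.eraseNone := by
  rw [← willingness_augment_image_some G η τ ε, image_some_eraseNone, erase_eq_of_notMem hS]

lemma willingness_augment_of_none_mem [Fintype V] (ε : ℝ) {S : Finset (Option V)}
    (hS : none ∈ S) :
    willingness (augment G) (augEta G η τ ε) (augTau τ) S =
      augEta G η τ ε none + willingness G η τ S.eraseNone := by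
  rw [← willingness_augment_insert_none, image_some_eraseNone, insert_erase hS]

end Willingness

theorem stmt0_general {V : Type*} [Fintype V] [DecidableEq V] (G : SimpleGraph V)
    (η : V → ℝ) (τ : V → V → ℝ)
    (hη : ∀ v, 0 ≤ η v) (hτ : ∀ u v, G.Adj u v → 0 ≤ τ u v)
    (k : ℕ) (ε : ℝ) (hε : 0 < ε)
    (Fd : Finset V) :
    (∀ S : Finset V, S.card = k → willingness G η τ S ≤ willingness G η τ Fd) ↔
      (((augment G).induce
          (↑(insert none (Fd.image some)) : Set (Option V))).Connected ∧
        ∀ S : Finset (Option V), S.card = k + 1 →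
          ((augment G).induce (↑S : Set (Option V))).Connected →
          willingness (augment G) (augEta G η τ ε) (augTau τ) S ≤
            willingness (augment G) (augEta G η τ ε) (augTau τ)
              (insert none (Fd.image some))) := by
  constructor
  · intro hopt
    refine ⟨connected_induce_augment_of_none_mem G (by simp), fun S hS _ => ?_⟩
    rw [willingness_augment_insert_none]
    by_cases hn : none ∈ S
    · have hcard : S.eraseNone.card = k := by
        rw [card_eraseNone_eq_card_erase, card_erase_of_mem hn, hS, Nat.add_sub_cancel]
      rw [willingness_augment_of_none_mem G η τ ε hn]
      gcongr
      exact hopt _ hcard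
    · have hle_univ := willingness_mono G η τ hη hτ (subset_univ S.eraseNone)
      have hFd := willingness_nonneg G η τ hη hτ Fd
      rw [willingness_augment_of_none_notMem G η τ ε hn, augEta_none]
      linarith
  · rintro ⟨-, hopt⟩ S hS
    have hcard : (insert none (S.image some)).card = k + 1 := by
      rw [card_insert_of_notMem (by simp), card_image_of_injective _ (Option.some_injective V), hS]
    have h := hopt _ hcard (connected_induce_augment_of_none_mem G (by simp))
    rwa [willingness_augment_insert_none, willingness_augment_insert_none, add_le_add_iff_left] at h

/-- A `k`-node subset `F*_d ⊆ V_d` maximizes the willingness over all `k`-node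
subsets of `V_d` (no connectivity requirement, i.e. WASO-dis) if and only if
`F* = F*_d ∪ {v̄}` maximizes the willingness over all `(k+1)`-node subsets of the
augmented graph `G` that induce a connected subgraph of `G` (i.e. WASO). -/
theorem stmt0 {V : Type*} [Fintype V] [DecidableEq V] (G : SimpleGraph V)
    (η : V → ℝ) (τ : V → V → ℝ)
    (hη : ∀ v, 0 ≤ η v) (hτ : ∀ u v, G.Adj u v → 0 ≤ τ u v)
    (k : ℕ) (hk : k ≤ Fintype.card V) (ε : ℝ) (hε : 0 < ε)
    (Fd : Finset V) (hFd : Fd.card = k) :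
    (∀ S : Finset V, S.card = k → willingness G η τ S ≤ willingness G η τ Fd) ↔
      (((augment G).induce
          (↑(insert none (Fd.image some)) : Set (Option V))).Connected ∧
        ∀ S : Finset (Option V), S.card = k + 1 →
          ((augment G).induce (↑S : Set (Option V))).Connected →
          willingness (augment G) (augEta G η τ ε) (augTau τ) S ≤
            willingness (augment G) (augEta G η τ ε) (augTau τ)
              (insert none (Fd.image some))) :=
  stmt0_general G η τ hη hτ k ε hε Fd
end

section
/- Let N_b and N_i be positive integers with N_i ≤ N_b, and let reals satisfy c_i < d_i, c_b < d_b, c_i ≤ c_b < d_i ≤ d_b. Let J_b* be the maximum of N_b i.i.d. random variables uniform on [c_b, d_b] and J_i* the maximum of N_i i.i.d. random variables uniform on [c_i, d_i], with all samples mutually independent. Then the probability that J_i* exceeds J_b* satisfies P(J_b* ≤ J_i*) ≤ (1/2)·((d_i − c_b)/(d_b − c_b))^{N_b}. -/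
open MeasureTheory

/-- The uniform probability distribution on the interval `[c, d]`. -/
noncomputable def uniformIcc (c d : ℝ) : Measure ℝ :=
  (ENNReal.ofReal (d - c))⁻¹ • volume.restrict (Set.Icc c d)

open Set
open scoped ENNReal

lemma Iic_inter_Icc (t c d : ℝ) : Iic t ∩ Icc c d = Icc c (min t d) := by
  ext x
  simp only [mem_inter_iff, mem_Iic, mem_Icc, le_min_iff]
  tauto

lemma uniformIcc_Iic {c d : ℝ} (h : c < d) (t : ℝ) :
    uniformIcc c d (Set.Iic t) = ENNReal.ofReal ((min t d - c) / (d - c)) := by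
  rw [uniformIcc, Measure.smul_apply, Measure.restrict_apply measurableSet_Iic,
    Iic_inter_Icc, Real.volume_Icc, smul_eq_mul,
    ENNReal.ofReal_div_of_pos (by linarith), ENNReal.div_eq_inv_mul]

lemma uniformIcc_prob {c d : ℝ} (h : c < d) : IsProbabilityMeasure (uniformIcc c d) := by
  constructor
  rw [uniformIcc, Measure.smul_apply, Measure.restrict_apply_univ, Real.volume_Icc,
    smul_eq_mul, ENNReal.inv_mul_cancel (by simp [h]) ENNReal.ofReal_ne_top]

lemma pi_sup_le {n : ℕ} (hn : 0 < n) (μ : Measure ℝ) [SigmaFinite μ] (t : ℝ) :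
    (Measure.pi fun _ : Fin n => μ) {x | (⨆ j, x j) ≤ t} = (μ (Iic t))^n := by
  have : Nonempty (Fin n) := ⟨⟨0, hn⟩⟩
  have hset : {x : Fin n → ℝ | (⨆ j, x j) ≤ t} = Set.pi univ (fun _ => Iic t) := by
    ext x
    simp only [mem_setOf_eq, mem_pi, mem_univ, mem_Iic, forall_true_left]
    constructor
    · intro hx j
      exact le_trans (le_ciSup (Set.Finite.bddAbove (Set.finite_range x)) j) hx
    · intro hx
      exact ciSup_le hx
  rw [hset, Measure.pi_pi]
  simp [Finset.prod_const]

lemma integral_pow_shift (a b : ℝ) (n : ℕ) (hab : a ≤ b) :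
    ∫ x in Icc a b, (x - a)^n = (b - a)^(n+1) / (n+1) := by
  rw [MeasureTheory.integral_Icc_eq_integral_Ioc, ← intervalIntegral.integral_of_le hab]
  have := intervalIntegral.integral_comp_sub_right (a := a) (b := b) (fun x => x^n) a
  rw [this, integral_pow]
  simp

lemma measurable_isup {n : ℕ} : Measurable (fun y : Fin n → ℝ => ⨆ j, y j) := by
  exact Measurable.iSup (fun j => measurable_pi_apply j)

noncomputable def maxDen (c d : ℝ) (n : ℕ) : ℝ → ℝ≥0∞ :=
  Set.indicator (Icc c d) (fun x => ENNReal.ofReal (n * (x - c)^(n-1) / (d - c)^n))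

lemma maxDen_measurable (c d : ℝ) (n : ℕ) : Measurable (maxDen c d n) := by
  apply Measurable.indicator _ measurableSet_Icc
  exact (measurable_const.mul (((measurable_id.sub measurable_const).pow measurable_const)) |>.div measurable_const).ennreal_ofReal

lemma setIntegral_den {c d : ℝ} (h : c < d) {n : ℕ} (hn : 0 < n) {m : ℝ} (hm : c ≤ m) :
    ∫ x in Icc c m, n * (x - c)^(n-1) / (d - c)^n = ((m - c)/(d - c))^n := by
  have hdc : (0:ℝ) < d - c := by linarith
  rw [MeasureTheory.integral_div, MeasureTheory.integral_const_mul, integral_pow_shift c m (n-1) hm]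
  have hn1 : n - 1 + 1 = n := Nat.succ_pred_eq_of_pos hn
  rw [hn1]
  have : ((n:ℝ) - 1 + 1) = (n:ℝ) := by ring
  rw [div_pow]
  have hcast : ((n - 1 : ℕ) : ℝ) + 1 = (n : ℝ) := by
    rw [Nat.cast_sub hn]; ring
  rw [hcast]
  field_simp

lemma lintegral_maxDen_Icc {c d : ℝ} (h : c < d) {n : ℕ} (hn : 0 < n) (m : ℝ) :
    ∫⁻ x in Icc c m, ENNReal.ofReal (n * (x - c)^(n-1) / (d - c)^n) ∂volume
      = ENNReal.ofReal (((max m c - c)/(d-c))^n) := by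
  by_cases hcm : c ≤ m
  · rw [← MeasureTheory.ofReal_integral_eq_lintegral_ofReal]
    · rw [setIntegral_den h hn hcm, max_eq_left hcm]
    · apply Continuous.integrableOn_Icc
      exact (continuous_const.mul ((continuous_id.sub continuous_const).pow _)).div_const _
    · filter_upwards [ae_restrict_mem measurableSet_Icc] with x hx
      apply div_nonneg (mul_nonneg (by positivity) (pow_nonneg (by linarith [hx.1]) _))
        (pow_nonneg (by linarith) _)
  · push_neg at hcm
    rw [Icc_eq_empty (by exact not_le.mpr hcm), Measure.restrict_empty, lintegral_zero_measure,
      max_eq_right hcm.le]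
    simp [zero_pow hn.ne']

lemma withDensity_maxDen_Iic {c d : ℝ} (h : c < d) {n : ℕ} (hn : 0 < n) (t : ℝ) :
    volume.withDensity (maxDen c d n) (Iic t)
      = ENNReal.ofReal (((max (min t d) c - c)/(d-c))^n) := by
  rw [withDensity_apply _ measurableSet_Iic, maxDen,
    lintegral_indicator measurableSet_Icc _, Measure.restrict_restrict measurableSet_Icc,
    inter_comm, Iic_inter_Icc, lintegral_maxDen_Icc h hn]

lemma withDensity_maxDen_finite {c d : ℝ} (h : c < d) {n : ℕ} (hn : 0 < n) :
    IsFiniteMeasure (volume.withDensity (maxDen c d n)) := by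
  constructor
  rw [withDensity_apply _ MeasurableSet.univ, Measure.restrict_univ, maxDen,
    lintegral_indicator measurableSet_Icc _, lintegral_maxDen_Icc h hn]
  exact ENNReal.ofReal_lt_top

lemma map_sup_pi_eq {c d : ℝ} (h : c < d) {n : ℕ} (hn : 0 < n) :
    Measure.map (fun y : Fin n → ℝ => ⨆ j, y j) (Measure.pi fun _ : Fin n => uniformIcc c d)
      = volume.withDensity (maxDen c d n) := by
  have hprob := uniformIcc_prob h
  have hfin := withDensity_maxDen_finite h hn
  have : IsProbabilityMeasure (Measure.pi fun _ : Fin n => uniformIcc c d) := inferInstance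
  refine Measure.ext_of_Iic _ _ (fun t => ?_)
  rw [Measure.map_apply measurable_isup measurableSet_Iic]
  have hpre : (fun y : Fin n → ℝ => ⨆ j, y j) ⁻¹' Iic t = {x | (⨆ j, x j) ≤ t} := rfl
  have key : ENNReal.ofReal ((min t d - c)/(d-c)) = ENNReal.ofReal ((max (min t d) c - c)/(d-c)) := by
    rcases le_or_gt c (min t d) with hc | hc
    · rw [max_eq_left hc]
    · rw [max_eq_right hc.le, ENNReal.ofReal_eq_zero.mpr, ENNReal.ofReal_eq_zero.mpr] <;>
        [simp; exact div_nonpos_of_nonpos_of_nonneg (by linarith) (by linarith)]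
  rw [hpre, pi_sup_le hn, uniformIcc_Iic h, withDensity_maxDen_Iic h hn, key,
    ENNReal.ofReal_pow (div_nonneg (by simp [le_max_right]) (by linarith))]

/-- Let `J_b*` be the maximum of `N_b` i.i.d. uniform samples on `[c_b, d_b]` and
`J_i*` the maximum of `N_i` i.i.d. uniform samples on `[c_i, d_i]`, all samples
mutually independent, with `N_i ≤ N_b` and `c_i ≤ c_b < d_i ≤ d_b`. Then
`P(J_b* ≤ J_i*) ≤ (1/2)·((d_i − c_b)/(d_b − c_b))^{N_b}`. -/
theorem stmt3 (Nb Ni : ℕ) (hNb : 0 < Nb) (hNi : 0 < Ni) (hNle : Ni ≤ Nb)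
    (ci di cb db : ℝ) (hcidi : ci < di) (hcbdb : cb < db)
    (hcicb : ci ≤ cb) (hcbdi : cb < di) (hdidb : di ≤ db) :
    ((Measure.pi fun _ : Fin Nb => uniformIcc cb db).prod
        (Measure.pi fun _ : Fin Ni => uniformIcc ci di))
      {ω : (Fin Nb → ℝ) × (Fin Ni → ℝ) | (⨆ j, ω.1 j) ≤ ⨆ j, ω.2 j} ≤
      ENNReal.ofReal ((1 / 2) * ((di - cb) / (db - cb)) ^ Nb) := by
  have hdbcb : (0:ℝ) < db - cb := by linarith
  have hdici : (0:ℝ) < di - ci := by linarith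
  have hprobb := uniformIcc_prob hcbdb
  have hprobi := uniformIcc_prob hcidi
  set p : ℝ := ((di - cb)/(db - cb))^Nb with hp
  have hp0 : 0 ≤ p := pow_nonneg (div_nonneg (by linarith) (by linarith)) _
  -- real integrand h and its bound B
  set g : ℝ → ℝ := fun x => Ni * (x - ci)^(Ni-1) / (di - ci)^Ni with hg
  set h : ℝ → ℝ := fun x => (max ((x - cb)/(db - cb)) 0)^Nb * g x with hh
  set B : ℝ → ℝ := fun x => p * (((x - ci)/(di - ci))^Ni * g x) with hB
  have hgcont : Continuous g := by
    exact (continuous_const.mul ((continuous_id.sub continuous_const).pow _)).div_const _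
  have hhcont : Continuous h := by
    exact ((((continuous_id.sub continuous_const).div_const _).max continuous_const).pow _).mul hgcont
  have hBcont : Continuous B := by
    exact continuous_const.mul ((((continuous_id.sub continuous_const).div_const _).pow _).mul hgcont)
  have hgnn : ∀ x ∈ Icc ci di, 0 ≤ g x := by
    intro x hx
    exact div_nonneg (mul_nonneg (by positivity) (pow_nonneg (by linarith [hx.1]) _))
      (pow_nonneg (by linarith) _)
  have hhnn : ∀ x ∈ Icc ci di, 0 ≤ h x :=
    fun x hx => mul_nonneg (pow_nonneg (le_max_right _ _) _) (hgnn x hx)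
  -- pointwise bound
  have hpt : ∀ x ∈ Icc ci di, h x ≤ B x := by
    intro x hx
    obtain ⟨hx1, hx2⟩ := hx
    rcases le_or_gt x cb with hxcb | hxcb
    · have : max ((x - cb)/(db - cb)) 0 = 0 :=
        max_eq_right (div_nonpos_of_nonpos_of_nonneg (by linarith) (by linarith))
      rw [hh]
      simp only [this, zero_pow hNb.ne', zero_mul]
      apply mul_nonneg hp0 (mul_nonneg (pow_nonneg (div_nonneg (by linarith) (by linarith)) _) (hgnn x ⟨hx1, hx2⟩))
    · have hq0 : 0 ≤ (x - cb)/(db - cb) := div_nonneg (by linarith) (by linarith)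
      have hmax : max ((x - cb)/(db - cb)) 0 = (x - cb)/(db - cb) := max_eq_left hq0
      have hdicb : (0:ℝ) < di - cb := by linarith
      have hr0 : 0 ≤ (x - cb)/(di - cb) := div_nonneg (by linarith) (by linarith)
      have hr1 : (x - cb)/(di - cb) ≤ 1 := by
        rw [div_le_one hdicb]; linarith
      have hq : (x - cb)/(db - cb) = ((di - cb)/(db - cb)) * ((x - cb)/(di - cb)) := by
        field_simp
      have key : ((x - cb)/(db - cb))^Nb ≤ p * ((x - ci)/(di - ci))^Ni := by
        rw [hq, mul_pow, hp]
        calc ((di - cb)/(db - cb))^Nb * ((x - cb)/(di - cb))^Nb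
            ≤ ((di - cb)/(db - cb))^Nb * ((x - cb)/(di - cb))^Ni := by
              apply mul_le_mul_of_nonneg_left (pow_le_pow_of_le_one hr0 hr1 hNle) (pow_nonneg (div_nonneg (by linarith) (by linarith)) _)
          _ ≤ ((di - cb)/(db - cb))^Nb * ((x - ci)/(di - ci))^Ni := by
              apply mul_le_mul_of_nonneg_left _ (pow_nonneg (div_nonneg (by linarith) (by linarith)) _)
              apply pow_le_pow_left₀ hr0 _ _
              rw [div_le_div_iff₀ hdicb hdici]
              nlinarith [mul_nonneg (sub_nonneg.mpr hcicb) (sub_nonneg.mpr hx2)]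
      simp only [hh, hB]
      rw [hmax]
      calc ((x - cb)/(db - cb))^Nb * g x ≤ (p * ((x - ci)/(di - ci))^Ni) * g x :=
            mul_le_mul_of_nonneg_right key (hgnn x ⟨hx1, hx2⟩)
        _ = p * (((x - ci)/(di - ci))^Ni * g x) := by ring
  -- integral of the bound
  have hIB : ∫ x in Icc ci di, B x = p * (1/2) := by
    have hGg : ∀ x : ℝ, ((x - ci)/(di - ci))^Ni * g x
        = ((2*Ni : ℕ) : ℝ) * (x - ci)^(2*Ni-1) / (di - ci)^(2*Ni) / 2 := by
      intro x
      have hpow : (x - ci)^Ni * (x - ci)^(Ni-1) = (x - ci)^(2*Ni-1) := by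
        rw [← pow_add]; congr 1; omega
      have hpow2 : ((di - ci)^Ni * (di - ci)^Ni : ℝ) = (di - ci)^(2*Ni) := by
        rw [← pow_add]; congr 1; omega
      rw [hg, div_pow, div_mul_div_comm, hpow2,
        show (x - ci)^Ni * ((Ni:ℝ) * (x - ci)^(Ni-1)) = (Ni:ℝ) * (x - ci)^(2*Ni-1) by
          rw [← hpow]; ring]
      push_cast
      ring
    simp_rw [hB, hGg]
    rw [MeasureTheory.integral_const_mul, MeasureTheory.integral_div,
      setIntegral_den hcidi (by omega : 0 < 2*Ni) hcidi.le,
      div_self hdici.ne', one_pow]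
  -- putting the measure computation together
  have hFm : Measurable (fun t : ℝ => (uniformIcc cb db (Iic t))^Nb) := by
    have : (fun t : ℝ => (uniformIcc cb db (Iic t))^Nb)
        = fun t => (ENNReal.ofReal ((min t db - cb)/(db - cb)))^Nb :=
      funext fun t => by rw [uniformIcc_Iic hcbdb]
    rw [this]
    exact ((((measurable_id.min measurable_const).sub measurable_const).div
      measurable_const).ennreal_ofReal).pow_const _
  have hSm : MeasurableSet {ω : (Fin Nb → ℝ) × (Fin Ni → ℝ) | (⨆ j, ω.1 j) ≤ ⨆ j, ω.2 j} :=
    measurableSet_le (measurable_isup.comp measurable_fst) (measurable_isup.comp measurable_snd)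
  rw [Measure.prod_apply_symm hSm]
  have step1 : ∀ y : Fin Ni → ℝ,
      (Measure.pi fun _ : Fin Nb => uniformIcc cb db)
        ((fun x => (x, y)) ⁻¹' {ω : (Fin Nb → ℝ) × (Fin Ni → ℝ) | (⨆ j, ω.1 j) ≤ ⨆ j, ω.2 j})
        = (uniformIcc cb db (Iic (⨆ j, y j)))^Nb := fun y => pi_sup_le hNb (uniformIcc cb db) (⨆ j, y j)
  rw [lintegral_congr step1]
  rw [← lintegral_map hFm measurable_isup, map_sup_pi_eq hcidi hNi,
    lintegral_withDensity_eq_lintegral_mul volume (maxDen_measurable ci di Ni) hFm]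
  have hprod : (fun t => (maxDen ci di Ni * fun t => (uniformIcc cb db (Iic t))^Nb) t)
      = Set.indicator (Icc ci di) (fun x => ENNReal.ofReal (h x)) := by
    funext x
    by_cases hx : x ∈ Icc ci di
    · rw [Pi.mul_apply, maxDen, indicator_of_mem hx, indicator_of_mem hx,
        uniformIcc_Iic hcbdb, min_eq_left (by linarith [hx.2])]
      rw [hh, ENNReal.ofReal_mul (pow_nonneg (le_max_right _ _) _),
        ENNReal.ofReal_pow (le_max_right _ _)]
      have hcl : ENNReal.ofReal (max ((x - cb)/(db - cb)) 0) = ENNReal.ofReal ((x - cb)/(db - cb)) := by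
        rcases le_or_gt 0 ((x - cb)/(db - cb)) with h0 | h0
        · rw [max_eq_left h0]
        · rw [max_eq_right h0.le, ENNReal.ofReal_eq_zero.mpr h0.le, ENNReal.ofReal_zero]
      rw [hcl, mul_comm]
    · rw [Pi.mul_apply, maxDen, indicator_of_notMem hx, indicator_of_notMem hx, zero_mul]
  rw [hprod, lintegral_indicator measurableSet_Icc _,
    ← MeasureTheory.ofReal_integral_eq_lintegral_ofReal (hhcont.integrableOn_Icc)
      (by filter_upwards [ae_restrict_mem measurableSet_Icc] with x hx using hhnn x hx)]
  apply ENNReal.ofReal_le_ofReal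
  calc ∫ x in Icc ci di, h x ≤ ∫ x in Icc ci di, B x := by
        apply setIntegral_mono_on hhcont.integrableOn_Icc hBcont.integrableOn_Icc
          measurableSet_Icc hpt
    _ = 1/2 * p := by rw [hIB]; ring
end
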